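/- arXiv:math/9901154 — 10 statements merged into one kernel-verified Lean document; each statement's English description precedes it below -/
import Mathlib

section
/- Let α, β, γ, c₁ be real constants, set κ = 0 and μ = 0, and let w : ℝ → ℝ be four times continuously differentiable and satisfy w·w⁗ + α·w′·w‴ + β·(w″)² + 2γ·(w·w″ + (w′)²) − c₁²·w″ − 5c₁·w′ − 6w = 0 on ℝ. Then the function u(x,t) = t⁻²·w(x − c₁·log t) solves equation (1) at every point (x,t) with x ∈ ℝ and t > 0. -/
/-!
Every `x`-derivative of `u = t⁻² w(x - c₁ log t)` is `t⁻²` times the same derivative of `w`,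
so with `κ = μ = 0` each quadratic term on the right is `t⁻⁴` times its counterpart for `w`.
Differentiating twice in `t` gives `u_tt = t⁻⁴ (6 w + 5 c₁ w' + c₁² w'')`, so equation (1)
is `t⁻⁴` times the ODE.
-/

/-- `u` solves equation (1), the nonlinear fourth order PDE
`u_tt = (κ u + γ u²)_xx + u u_xxxx + μ u_xxtt + α u_x u_xxx + β (u_xx)²`,
at the point `(x, t)`. -/
noncomputable def SolvesEq1 (α β γ κ μ : ℝ) (u : ℝ → ℝ → ℝ) (x t : ℝ) : Prop :=
  iteratedDeriv 2 (fun s => u x s) t =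
    iteratedDeriv 2 (fun y => κ * u y t + γ * (u y t) ^ 2) x
    + u x t * iteratedDeriv 4 (fun y => u y t) x
    + μ * iteratedDeriv 2 (fun y => iteratedDeriv 2 (fun s => u y s) t) x
    + α * deriv (fun y => u y t) x * iteratedDeriv 3 (fun y => u y t) x
    + β * (iteratedDeriv 2 (fun y => u y t) x) ^ 2

open Real Topology

lemma iteratedDeriv_const_mul_comp_sub (n : ℕ) (f : ℝ → ℝ) (c a x : ℝ) :
    iteratedDeriv n (fun y => c * f (y - a)) x = c * iteratedDeriv n f (x - a) := by
  rw [iteratedDeriv_const_mul_field, iteratedDeriv_comp_sub_const]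

lemma iteratedDeriv_two_sq {f : ℝ → ℝ} {x : ℝ} (hf : ContDiffAt ℝ 2 f x) :
    iteratedDeriv 2 (fun y => f y ^ 2) x = 2 * (f x * iteratedDeriv 2 f x + deriv f x ^ 2) := by
  simp only [sq, iteratedDeriv_fun_mul hf hf, Finset.sum_range_succ, Finset.sum_range_zero,
    Nat.reduceSub, Nat.choose_zero_right, Nat.choose_one_right, Nat.choose_self,
    iteratedDeriv_zero, iteratedDeriv_one]
  push_cast
  ring

section

variable {x c s : ℝ}

lemma hasDerivAt_inv_pow_mul_comp_log (k : ℕ) {f : ℝ → ℝ}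
    (hf : DifferentiableAt ℝ f (x - c * log s)) (hs : s ≠ 0) :
    HasDerivAt (fun s => s⁻¹ ^ k * f (x - c * log s))
      (s⁻¹ ^ (k + 1) * -(k * f (x - c * log s) + c * deriv f (x - c * log s))) s := by
  have hpow := (hasDerivAt_inv hs).fun_pow k
  have hcomp := hf.hasDerivAt.comp s (((hasDerivAt_log hs).const_mul c).const_sub x)
  refine (hpow.fun_mul hcomp).congr_deriv ?_
  rw [Function.comp_apply, ← inv_pow]
  rcases k with _ | k
  · simp only [CharP.cast_eq_zero]
    ring
  · rw [Nat.add_sub_cancel]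
    push_cast
    ring

lemma iteratedDeriv_two_inv_pow_mul_comp_log (k : ℕ) {w : ℝ → ℝ} (hw : ContDiff ℝ 2 w)
    (hs : s ≠ 0) :
    iteratedDeriv 2 (fun s => s⁻¹ ^ k * w (x - c * log s)) s =
      s⁻¹ ^ (k + 2) * (k * (k + 1) * w (x - c * log s)
        + (2 * k + 1) * c * deriv w (x - c * log s)
        + c ^ 2 * iteratedDeriv 2 w (x - c * log s)) := by
  obtain ⟨hw₀, -, hw'⟩ := contDiff_succ_iff_deriv (n := 1) |>.1 hw
  have hw₁ : Differentiable ℝ (deriv w) := hw'.differentiable one_ne_zero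
  set g : ℝ → ℝ := fun z => -(k * w z + c * deriv w z)
  have hg : ∀ z, HasDerivAt g (-(k * deriv w z + c * deriv (deriv w) z)) z := fun z =>
    (((hw₀ z).hasDerivAt.const_mul _).add ((hw₁ z).hasDerivAt.const_mul c)).neg
  have hfirst : deriv (fun s => s⁻¹ ^ k * w (x - c * log s)) =ᶠ[𝓝 s]
      fun s => s⁻¹ ^ (k + 1) * g (x - c * log s) := by
    filter_upwards [isOpen_ne.mem_nhds hs] with r hr
    exact (hasDerivAt_inv_pow_mul_comp_log k (hw₀ _) hr).deriv
  simp only [iteratedDeriv_succ, iteratedDeriv_zero]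
  rw [hfirst.deriv_eq,
    (hasDerivAt_inv_pow_mul_comp_log (k + 1) (hg _).differentiableAt hs).deriv, (hg _).deriv]
  simp only [g]
  push_cast
  ring

end

theorem reduction_log_solves_eq1 (α β γ c₁ : ℝ) (w : ℝ → ℝ)
    (hw : ContDiff ℝ 4 w)
    (hODE : ∀ z : ℝ,
      w z * iteratedDeriv 4 w z
        + α * deriv w z * iteratedDeriv 3 w z
        + β * (iteratedDeriv 2 w z) ^ 2
        + 2 * γ * (w z * iteratedDeriv 2 w z + (deriv w z) ^ 2)
        - c₁ ^ 2 * iteratedDeriv 2 w z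
        - 5 * c₁ * deriv w z
        - 6 * w z = 0) :
    ∀ x t : ℝ, 0 < t →
      SolvesEq1 α β γ 0 0 (fun x t => t⁻¹ ^ 2 * w (x - c₁ * Real.log t)) x t := by
  intro x t ht
  have hnonlin : iteratedDeriv 2 (fun y => 0 * (t⁻¹ ^ 2 * w (y - c₁ * log t))
      + γ * (t⁻¹ ^ 2 * w (y - c₁ * log t)) ^ 2) x
      = γ * t⁻¹ ^ 4 * iteratedDeriv 2 (fun v => w v ^ 2) (x - c₁ * log t) := by
    rw [← iteratedDeriv_const_mul_comp_sub]
    congr 1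
    funext y
    ring
  rw [SolvesEq1, iteratedDeriv_two_inv_pow_mul_comp_log 2 (hw.of_le (by norm_num)) ht.ne',
    hnonlin, iteratedDeriv_two_sq (hw.of_le (by norm_num)).contDiffAt]
  simp only [iteratedDeriv_const_mul_comp_sub, ← iteratedDeriv_one]
  rw [iteratedDeriv_one]
  push_cast
  linear_combination (-t⁻¹ ^ 4) * hODE (x - c₁ * log t)
end

section
/- Let α, β, κ be real constants, set γ = 0 and μ = 0, and let w : ℝ → ℝ be four times continuously differentiable and satisfy w(z)·w⁗(z) + α·w′(z)·w‴(z) + β·(w″(z))² + κ·w″(z) − z²·w″(z) + 2z·w′(z) − 2·w(z) = 0 for all z ∈ ℝ. Then the function u(x,t) = t²·w(x/t) solves equation (1) at every point (x,t) with x ∈ ℝ and t > 0. -/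
/-!
For `u x t = t ^ 2 * w (x / t)` every `x`-derivative lowers the power of `t` by one, so
`∂ₓⁿ u = t ^ (2 - n) * w⁽ⁿ⁾ (x / t)`, and the Euler operator of the self-similar variable gives
`∂ₜₜ u = 2 w - 2 z w' + z² w''` at `z = x / t`. Every term of equation (1) with `γ = μ = 0` is
then of order `t⁰`, and the equation reduces to the ODE for `w` at `z = x / t`.
-/

open Filter Topology

theorem iteratedDeriv_comp_div_const {n : ℕ} {f : ℝ → ℝ} (hf : ContDiff ℝ n f) (t x : ℝ) :
    iteratedDeriv n (fun y => f (y / t)) x = iteratedDeriv n f (x / t) / t ^ n := by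
  simp only [div_eq_inv_mul _ t, congrFun (iteratedDeriv_comp_const_mul hf t⁻¹) x, inv_pow]
  ring

theorem hasDerivAt_pow_succ_mul_comp_div (k : ℕ) {f : ℝ → ℝ} {f' x s : ℝ} (hs : s ≠ 0)
    (hf : HasDerivAt f f' (x / s)) :
    HasDerivAt (fun s => s ^ (k + 1) * f (x / s))
      (s ^ k * ((k + 1) * f (x / s) - x / s * f')) s := by
  have hdiv : HasDerivAt (fun s => x / s) (-(x / s ^ 2)) s := by
    simpa [div_eq_mul_inv] using (hasDerivAt_inv hs).const_mul x
  refine ((hasDerivAt_pow (k + 1) s).mul (hf.comp s hdiv)).congr_deriv ?_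
  rw [Function.comp_apply]
  field_simp
  push_cast
  ring

theorem iteratedDeriv_two_sq_mul_comp_div {f : ℝ → ℝ} (hf : ContDiff ℝ 2 f) {x s : ℝ}
    (hs : s ≠ 0) :
    iteratedDeriv 2 (fun s => s ^ 2 * f (x / s)) s =
      2 * f (x / s) - 2 * (x / s) * deriv f (x / s) + (x / s) ^ 2 * iteratedDeriv 2 f (x / s) := by
  have hf1 : Differentiable ℝ f := hf.differentiable (by norm_num)
  have hf2 : Differentiable ℝ (deriv f) := by
    simpa [iteratedDeriv_one] using hf.differentiable_iteratedDeriv 1 (by norm_num)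
  set g : ℝ → ℝ := fun z => 2 * f z - z * deriv f z
  have hfirst : deriv (fun s => s ^ 2 * f (x / s)) =ᶠ[𝓝 s] fun s => s ^ 1 * g (x / s) := by
    filter_upwards [eventually_ne_nhds hs] with r hr
    convert (hasDerivAt_pow_succ_mul_comp_div 1 hr (hf1 _).hasDerivAt).deriv using 1
    simp only [g]
    push_cast
    ring
  have hg : HasDerivAt g (deriv f (x / s) - x / s * iteratedDeriv 2 f (x / s)) (x / s) := by
    refine ((((hf1 _).hasDerivAt).const_mul 2).sub
      ((hasDerivAt_id _).mul (hf2 _).hasDerivAt)).congr_deriv ?_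
    rw [iteratedDeriv_succ, iteratedDeriv_one]
    ring
  rw [iteratedDeriv_succ, iteratedDeriv_one, hfirst.deriv_eq,
    (hasDerivAt_pow_succ_mul_comp_div 0 hs hg).deriv]
  simp only [g]
  push_cast
  ring

theorem reduction_selfsimilar_solves_eq1 (α β κ : ℝ) (w : ℝ → ℝ)
    (hw : ContDiff ℝ 4 w)
    (hODE : ∀ z : ℝ,
      w z * iteratedDeriv 4 w z
        + α * deriv w z * iteratedDeriv 3 w z
        + β * (iteratedDeriv 2 w z) ^ 2
        + κ * iteratedDeriv 2 w z
        - z ^ 2 * iteratedDeriv 2 w z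
        + 2 * z * deriv w z
        - 2 * w z = 0) :
    ∀ x t : ℝ, 0 < t →
      SolvesEq1 α β 0 κ 0 (fun x t => t ^ 2 * w (x / t)) x t := by
  intro x t ht
  have hspace (n : ℕ) (hn : n ≤ 4) := iteratedDeriv_comp_div_const
    (hw.of_le (by exact_mod_cast hn : (n : WithTop ℕ∞) ≤ 4)) t x
  simp only [SolvesEq1, zero_mul, add_zero, ← iteratedDeriv_one, iteratedDeriv_const_mul_field]
  rw [iteratedDeriv_two_sq_mul_comp_div (hw.of_le (by norm_num)) ht.ne',
    hspace 1 (by norm_num), hspace 2 (by norm_num), hspace 3 (by norm_num),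
    hspace 4 (by norm_num), iteratedDeriv_one]
  have hODE' := hODE (x / t)
  field_simp at hODE' ⊢
  linear_combination (-1) * hODE'
end

section
/- Let α, β, c₄ be real constants, set κ = γ = μ = 0, and let w : ℝ → ℝ be four times continuously differentiable and satisfy w(z)·w⁗(z) + α·w′(z)·w‴(z) + β·(w″(z))² − c₄²·z²·w″(z) + 7c₄²·z·w′(z) − 16c₄²·w(z) = 0 for all z ∈ ℝ. Then the function u(x,t) = exp(4c₄·t)·w(x·exp(−c₄·t)) solves equation (1) at every point (x,t) ∈ ℝ². -/
/-! The ansatz is a scaling reduction. With `z = x e^{-c t}`, every `x`-derivative of `u`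
contributes a factor `e^{-c t}`, so each quadratic term `u ∂ₓ⁴u`, `∂ₓu ∂ₓ³u`, `(∂ₓ²u)²` equals
`e^{8ct} e^{-4ct} = e^{4ct}` times the corresponding product of derivatives of `w` at `z`, while
`∂ₜ²u = c² e^{4ct} (16 w - 7 z w' + z² w'')`. Equation (1) with `κ = γ = μ = 0` is therefore
`e^{4ct}` times the ODE for `w` at `z`. -/

open Real

theorem iteratedDeriv_const_mul_comp_mul_const {𝕜 : Type*} [NontriviallyNormedField 𝕜]
    {g : 𝕜 → 𝕜} {n : ℕ} (hg : ContDiff 𝕜 n g) (a b y : 𝕜) :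
    iteratedDeriv n (fun z => a * g (z * b)) y = a * b ^ n * iteratedDeriv n g (y * b) := by
  simp_rw [iteratedDeriv_const_mul_field, mul_comm _ b, iteratedDeriv_comp_const_mul hg, mul_assoc]

theorem hasDerivAt_exp_mul_comp_mul_exp {g : ℝ → ℝ} {a b x s : ℝ}
    (hg : DifferentiableAt ℝ g (x * exp (b * s))) :
    HasDerivAt (fun s => exp (a * s) * g (x * exp (b * s)))
      (exp (a * s) * (a * g (x * exp (b * s))
        + b * (x * exp (b * s)) * deriv g (x * exp (b * s)))) s := by
  have hexp (c : ℝ) : HasDerivAt (fun s => exp (c * s)) (exp (c * s) * c) s := by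
    simpa using ((hasDerivAt_id s).const_mul c).exp
  refine ((hexp a).fun_mul (hg.hasDerivAt.comp s ((hexp b).const_mul x))).congr_deriv ?_
  simp only [Function.comp_apply]; ring

/-- Stated so that the derivative has the same shape, with `g` replaced by `a g + b z g'`: the
second derivative is then two applications of this lemma. -/
theorem deriv_exp_mul_comp_mul_exp {g : ℝ → ℝ} (hg : Differentiable ℝ g) (a b x : ℝ) :
    deriv (fun s => exp (a * s) * g (x * exp (b * s)))
      = fun s => exp (a * s) * (fun z => a * g z + b * z * deriv g z) (x * exp (b * s)) :=
  funext fun _ => (hasDerivAt_exp_mul_comp_mul_exp (hg _)).deriv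

theorem iteratedDeriv_two_exp_mul_comp_mul_exp {g : ℝ → ℝ} (hg : ContDiff ℝ 2 g)
    (a b x s : ℝ) :
    iteratedDeriv 2 (fun s => exp (a * s) * g (x * exp (b * s))) s
      = exp (a * s) * (a ^ 2 * g (x * exp (b * s))
        + (2 * a * b + b ^ 2) * (x * exp (b * s)) * deriv g (x * exp (b * s))
        + b ^ 2 * (x * exp (b * s)) ^ 2 * iteratedDeriv 2 g (x * exp (b * s))) := by
  have hg1 : Differentiable ℝ g := hg.differentiable two_ne_zero
  have hg2 : Differentiable ℝ (deriv g) := by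
    simpa [iteratedDeriv_one] using hg.differentiable_iteratedDeriv 1 (by norm_num)
  have hshape : ∀ z, HasDerivAt (fun z => a * g z + b * z * deriv g z)
      (a * deriv g z + b * deriv g z + b * z * iteratedDeriv 2 g z) z := by
    intro z
    rw [iteratedDeriv_succ, iteratedDeriv_one]
    refine (((hg1 z).hasDerivAt.const_mul a).add
      (((hasDerivAt_id z).const_mul b).mul (hg2 z).hasDerivAt)).congr_deriv ?_
    simp only [id]; ring
  rw [iteratedDeriv_succ, iteratedDeriv_one, deriv_exp_mul_comp_mul_exp hg1,
    (hasDerivAt_exp_mul_comp_mul_exp (hshape _).differentiableAt).deriv, (hshape _).deriv]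
  ring

theorem reduction_exp_solves_eq1 (α β c₄ : ℝ) (w : ℝ → ℝ)
    (hw : ContDiff ℝ 4 w)
    (hODE : ∀ z : ℝ,
      w z * iteratedDeriv 4 w z
        + α * deriv w z * iteratedDeriv 3 w z
        + β * (iteratedDeriv 2 w z) ^ 2
        - c₄ ^ 2 * z ^ 2 * iteratedDeriv 2 w z
        + 7 * c₄ ^ 2 * z * deriv w z
        - 16 * c₄ ^ 2 * w z = 0) :
    ∀ x t : ℝ,
      SolvesEq1 α β 0 0 0
        (fun x t => Real.exp (4 * c₄ * t) * w (x * Real.exp (-c₄ * t))) x t := by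
  intro x t
  have hscale : exp (4 * c₄ * t) * exp (-c₄ * t) ^ 4 = 1 := by
    rw [← exp_nat_mul, ← exp_add]
    ring_nf
    exact exp_zero
  have hlinear : iteratedDeriv 2 (fun y => 0 * (exp (4 * c₄ * t) * w (y * exp (-c₄ * t)))
      + 0 * (exp (4 * c₄ * t) * w (y * exp (-c₄ * t))) ^ 2) x = 0 := by
    simp
  have hspace (n : ℕ) (hn : n ≤ 4) :=
    iteratedDeriv_const_mul_comp_mul_const (hw.of_le (by exact_mod_cast hn))
      (exp (4 * c₄ * t)) (exp (-c₄ * t)) x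
  unfold SolvesEq1
  rw [hlinear, ← iteratedDeriv_one, hspace 1 (by norm_num), hspace 2 (by norm_num),
    hspace 3 (by norm_num), hspace 4 le_rfl,
    iteratedDeriv_two_exp_mul_comp_mul_exp (hw.of_le (by norm_num)), iteratedDeriv_one]
  set z := x * exp (-c₄ * t)
  set E := exp (4 * c₄ * t)
  linear_combination (-E) * hODE z
    - E * (w z * iteratedDeriv 4 w z + α * deriv w z * iteratedDeriv 3 w z
      + β * iteratedDeriv 2 w z ^ 2) * hscale
end

section
/- Let α, β, c₄ be real constants, set κ = γ = μ = 0, and let w : ℝ → ℝ be four times continuously differentiable and satisfy w(z)·w⁗(z) + α·w′(z)·w‴(z) + β·(w″(z))² − c₄²·z²·w″(z) + (7c₄² − 5c₄)·z·w′(z) − (16c₄² − 20c₄ + 6)·w(z) = 0 for all z ∈ ℝ. Then the function u(x,t) = t^(4c₄ − 2)·w(x·t^(−c₄)) (real powers of t) solves equation (1) at every point (x,t) with x ∈ ℝ and t > 0. -/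
open Real

lemma iteratedDeriv_const_mul_comp_mul_const_s4 {n : ℕ} {w : ℝ → ℝ} (hw : ContDiff ℝ n w)
    (C B x : ℝ) :
    iteratedDeriv n (fun y => C * w (y * B)) x = C * B ^ n * iteratedDeriv n w (x * B) := by
  have hcomm : (fun y => w (y * B)) = fun y => w (B * y) := by simp_rw [mul_comm _ B]
  rw [iteratedDeriv_const_mul_field C (fun y => w (y * B)), hcomm,
    iteratedDeriv_comp_const_mul hw]
  simp only [mul_comm B x, mul_assoc]

section SelfSimilar

variable {w : ℝ → ℝ} {a c x t : ℝ}

lemma hasDerivAt_rpow_mul_comp_mul_rpow (ht : 0 < t)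
    (hw : DifferentiableAt ℝ w (x * t ^ (-c))) :
    HasDerivAt (fun s => s ^ a * w (x * s ^ (-c)))
      (t ^ (a - 1) * (a * w (x * t ^ (-c)) - c * (x * t ^ (-c)) * deriv w (x * t ^ (-c)))) t := by
  have hpow (p : ℝ) : HasDerivAt (fun s => s ^ p) (p * t ^ (p - 1)) t :=
    hasDerivAt_rpow_const (Or.inl ht.ne')
  have hz := hw.hasDerivAt.comp t ((hpow (-c)).const_mul x)
  refine ((hpow a).mul hz).congr_deriv ?_
  rw [show -c - 1 = -c + -1 by ring, show a - 1 = a + -1 by ring, rpow_add ht, rpow_add ht,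
    Function.comp_apply]
  ring

lemma iteratedDeriv_two_rpow_mul_comp_mul_rpow (ht : 0 < t) (hw : ContDiff ℝ 2 w) :
    iteratedDeriv 2 (fun s => s ^ a * w (x * s ^ (-c))) t =
      t ^ (a - 2) * (a * (a - 1) * w (x * t ^ (-c))
        - c * (2 * a - 1 - c) * (x * t ^ (-c)) * deriv w (x * t ^ (-c))
        + c ^ 2 * (x * t ^ (-c)) ^ 2 * iteratedDeriv 2 w (x * t ^ (-c))) := by
  set g : ℝ → ℝ := fun z => a * w z - c * z * deriv w z
  have hw₁ : Differentiable ℝ w := hw.differentiable two_ne_zero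
  have hg (z : ℝ) : HasDerivAt g
      (a * deriv w z - (c * 1 * deriv w z + c * z * iteratedDeriv 2 w z)) z := by
    rw [iteratedDeriv_succ, iteratedDeriv_one]
    exact ((hw₁ z).hasDerivAt.const_mul a).sub (((hasDerivAt_id z).const_mul c).mul
      (hw.differentiable_deriv_two z).hasDerivAt)
  have hderiv : deriv (fun s => s ^ a * w (x * s ^ (-c))) =ᶠ[nhds t]
      fun s => s ^ (a - 1) * g (x * s ^ (-c)) := by
    filter_upwards [Ioi_mem_nhds ht] with s hs
    exact (hasDerivAt_rpow_mul_comp_mul_rpow hs (hw₁ _)).deriv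
  rw [iteratedDeriv_succ, iteratedDeriv_one, hderiv.deriv_eq,
    (hasDerivAt_rpow_mul_comp_mul_rpow ht (hg _).differentiableAt).deriv, (hg _).deriv,
    show a - 1 - 1 = a - 2 by ring]
  ring

end SelfSimilar

theorem reduction_power_solves_eq1 (α β c₄ : ℝ) (w : ℝ → ℝ)
    (hw : ContDiff ℝ 4 w)
    (hODE : ∀ z : ℝ,
      w z * iteratedDeriv 4 w z
        + α * deriv w z * iteratedDeriv 3 w z
        + β * (iteratedDeriv 2 w z) ^ 2
        - c₄ ^ 2 * z ^ 2 * iteratedDeriv 2 w z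
        + (7 * c₄ ^ 2 - 5 * c₄) * z * deriv w z
        - (16 * c₄ ^ 2 - 20 * c₄ + 6) * w z = 0) :
    ∀ x t : ℝ, 0 < t →
      SolvesEq1 α β 0 0 0
        (fun x t => t ^ (4 * c₄ - 2) * w (x * t ^ (-c₄))) x t := by
  intro x t ht
  have hspatial (n : ℕ) (hn : n ≤ 4) :=
    iteratedDeriv_const_mul_comp_mul_const_s4 (hw.of_le (by exact_mod_cast hn))
      (t ^ (4 * c₄ - 2)) (t ^ (-c₄)) x
  have hscale : (t ^ (4 * c₄ - 2)) ^ 2 * (t ^ (-c₄)) ^ 4 = t ^ (4 * c₄ - 2 - 2) := by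
    rw [← rpow_natCast, ← rpow_natCast, ← rpow_mul ht.le, ← rpow_mul ht.le, ← rpow_add ht]
    congr 1
    push_cast
    ring
  simp only [SolvesEq1, zero_mul, zero_add, add_zero, iteratedDeriv_const, ite_self]
  rw [iteratedDeriv_two_rpow_mul_comp_mul_rpow ht (hw.of_le (by norm_num))]
  simp only [← iteratedDeriv_one] at hODE ⊢
  rw [hspatial 1 (by norm_num), hspatial 2 (by norm_num), hspatial 3 (by norm_num),
    hspatial 4 (by norm_num)]
  set z := x * t ^ (-c₄)
  linear_combination (-t ^ (4 * c₄ - 2 - 2)) * hODE z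
    - (w z * iteratedDeriv 4 w z + α * iteratedDeriv 1 w z * iteratedDeriv 3 w z
      + β * iteratedDeriv 2 w z ^ 2) * hscale
end

section
/- Let α, γ, κ, μ, a₁, a₂ be real constants with α ≠ 0, α ≠ 1, γ ≠ 0 and γ/α > 0, and set β = α − 1, a₃ = √(2γ/α) and a₄ = (α·(κ − a₁²) − 2a₁²·γ·μ)/(2γ·(1 − α)). Then the function u(x,t) = a₂·cos(a₃·(x − a₁·t)) + a₄ solves equation (1) at every point (x,t) ∈ ℝ². -/
/-! The solution is a travelling wave `u x t = f (x - a₁ * t)`, which turns (1) into an ODE for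
the profile `f`. For `f z = A cos (c z) + d` one has `f'' = -c² (f - d)`, `f''' = -c² f'` and
`f'''' = c⁴ (f - d)`; the terms in `f'²` and `(f - d)²` then cancel exactly when `α c² = 2γ`,
which fixes `c = a₃`, and the terms linear in `f - d` leave a linear equation for `d = a₄`. -/

open Real

section IteratedDeriv

variable {𝕜 : Type*} [NontriviallyNormedField 𝕜]

theorem iteratedDeriv_comp_const_sub_mul {F : Type*} [NormedAddCommGroup F] [NormedSpace 𝕜 F]
    {n : ℕ} {f : 𝕜 → F} (hf : ContDiff 𝕜 n f) (x a t : 𝕜) :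
    iteratedDeriv n (fun s => f (x - a * s)) t = (-a) ^ n • iteratedDeriv n f (x - a * t) := by
  have hg : ContDiff 𝕜 n fun z => f (x - z) := hf.comp (contDiff_const.sub contDiff_id)
  rw [iteratedDeriv_comp_const_smul hg a, iteratedDeriv_comp_const_sub]
  simp only [smul_smul, neg_pow a, mul_comm]

theorem iteratedDeriv_two_fun_sq {f : 𝕜 → 𝕜} {x : 𝕜} (hf : ContDiffAt 𝕜 2 f x) :
    iteratedDeriv 2 (fun y => f y ^ 2) x = 2 * (deriv f x ^ 2 + f x * iteratedDeriv 2 f x) := by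
  simp only [sq]
  rw [iteratedDeriv_fun_mul hf hf]
  simp only [Finset.sum_range_succ, Finset.sum_range_zero, Nat.choose, iteratedDeriv_zero,
    iteratedDeriv_one]
  norm_num
  ring

end IteratedDeriv

def TravellingWaveEq (α β γ κ μ a : ℝ) (f : ℝ → ℝ) (z : ℝ) : Prop :=
  a ^ 2 * iteratedDeriv 2 f z =
    κ * iteratedDeriv 2 f z + 2 * γ * (deriv f z ^ 2 + f z * iteratedDeriv 2 f z)
    + f z * iteratedDeriv 4 f z
    + μ * a ^ 2 * iteratedDeriv 4 f z
    + α * deriv f z * iteratedDeriv 3 f z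
    + β * iteratedDeriv 2 f z ^ 2

theorem solvesEq1_travellingWave_iff {α β γ κ μ a : ℝ} {f : ℝ → ℝ} (hf : ContDiff ℝ 2 f)
    (x t : ℝ) :
    SolvesEq1 α β γ κ μ (fun x t => f (x - a * t)) x t ↔
      TravellingWaveEq α β γ κ μ a f (x - a * t) := by
  have hshift : ContDiff ℝ 2 fun y => f (y - a * t) := hf.comp (contDiff_id.sub contDiff_const)
  have hmixed : (fun y => iteratedDeriv 2 (fun s => f (y - a * s)) t)
      = fun y => a ^ 2 * iteratedDeriv 2 f (y - a * t) := by
    funext y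
    rw [iteratedDeriv_comp_const_sub_mul hf, smul_eq_mul, neg_sq]
  have hfourth : iteratedDeriv 2 (iteratedDeriv 2 f) = iteratedDeriv 4 f := by
    simp only [iteratedDeriv_eq_iterate, ← Function.iterate_add_apply]
  unfold SolvesEq1 TravellingWaveEq
  rw [iteratedDeriv_comp_const_sub_mul hf, hmixed,
    iteratedDeriv_fun_add (by fun_prop) (by fun_prop), iteratedDeriv_const_mul_field,
    iteratedDeriv_const_mul_field, iteratedDeriv_two_fun_sq hshift.contDiffAt]
  simp only [iteratedDeriv_comp_sub_const, deriv_comp_sub_const, iteratedDeriv_const_mul_field,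
    smul_eq_mul, neg_sq, hfourth]
  constructor <;> intro h <;> linear_combination h

theorem iteratedDeriv_const_mul_cos_mul_add_const {n : ℕ} (hn : 0 < n) (A c d z : ℝ) :
    iteratedDeriv n (fun z => A * cos (c * z) + d) z =
      A * c ^ n * iteratedDeriv n cos (c * z) := by
  simp only [add_comm _ d]
  rw [iteratedDeriv_const_add hn, iteratedDeriv_const_mul_field,
    iteratedDeriv_comp_const_mul contDiff_cos, mul_assoc]

theorem travellingWaveEq_cos {α γ κ μ a c d : ℝ} (hc : α * c ^ 2 = 2 * γ)
    (hd : (c ^ 2 - 2 * γ) * d = κ - a ^ 2 - μ * a ^ 2 * c ^ 2) (A z : ℝ) :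
    TravellingWaveEq α (α - 1) γ κ μ a (fun z => A * cos (c * z) + d) z := by
  unfold TravellingWaveEq
  rw [← iteratedDeriv_one]
  simp only [iteratedDeriv_const_mul_cos_mul_add_const (Nat.succ_pos _)]
  simp only [iteratedDeriv_add_one_cos, iteratedDeriv_add_one_sin, iteratedDeriv_one,
    Real.deriv_sin, deriv_cos', Pi.neg_apply]
  linear_combination (A ^ 2 * c ^ 2 * (sin (c * z) ^ 2 - cos (c * z) ^ 2)) * hc
    - (A * c ^ 2 * cos (c * z)) * hd

theorem cos_solution_solves_eq1 (α γ κ μ a₁ a₂ : ℝ)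
    (hα0 : α ≠ 0) (hα1 : α ≠ 1) (hγ : γ ≠ 0) (hγα : γ / α > 0) :
    ∀ x t : ℝ,
      SolvesEq1 α (α - 1) γ κ μ
        (fun x t => a₂ * Real.cos (Real.sqrt (2 * γ / α) * (x - a₁ * t))
          + (α * (κ - a₁ ^ 2) - 2 * a₁ ^ 2 * γ * μ) / (2 * γ * (1 - α))) x t := by
  intro x t
  set c := Real.sqrt (2 * γ / α)
  set d := (α * (κ - a₁ ^ 2) - 2 * a₁ ^ 2 * γ * μ) / (2 * γ * (1 - α))
  have hc : α * c ^ 2 = 2 * γ := by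
    rw [Real.sq_sqrt (by rw [mul_div_assoc]; positivity)]
    field_simp
  have hd : (c ^ 2 - 2 * γ) * d = κ - a₁ ^ 2 - μ * a₁ ^ 2 * c ^ 2 := by
    have hden : 2 * γ * (1 - α) ≠ 0 := by
      have : 1 - α ≠ 0 := sub_ne_zero.mpr hα1.symm
      positivity
    have hd' : 2 * γ * (1 - α) * d = α * (κ - a₁ ^ 2) - 2 * a₁ ^ 2 * γ * μ :=
      mul_div_cancel₀ _ hden
    apply mul_left_cancel₀ hα0
    linear_combination (d + μ * a₁ ^ 2) * hc + hd'
  exact (solvesEq1_travellingWave_iff (f := fun z => a₂ * cos (c * z) + d) (by fun_prop) x t).mpr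
    (travellingWaveEq_cos hc hd a₂ _)
end

section
/- Let κ be a real constant and set γ = 0, α = −2, β = 1 and μ = 1. Let A, B : ℝ → ℝ be twice continuously differentiable with A″(t) = −κ·A(t) and B″(t) = −κ·B(t) for all t, suppose A(t)² + B(t)² > 0 for all t, and let w : ℝ → ℝ be an arbitrary twice continuously differentiable function. Then the function u(x,t) = ½·√(A(t)² + B(t)²)·sinh(x + w(t)) − κ + ½·(A(t)·sin x + B(t)·cos x) solves equation (1) at every point (x,t) ∈ ℝ². -/
open Real

noncomputable def hypTrigComb (p q a b k x : ℝ) : ℝ :=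
  p * sinh x + q * cosh x + a * sin x + b * cos x + k

section Space

variable (p q a b k : ℝ)

theorem hasDerivAt_hypTrigComb (x : ℝ) :
    HasDerivAt (hypTrigComb p q a b k) (hypTrigComb q p (-b) a 0 x) x := by
  refine (((((hasDerivAt_sinh x).const_mul p).add ((hasDerivAt_cosh x).const_mul q)).add
    ((hasDerivAt_sin x).const_mul a)).add ((hasDerivAt_cos x).const_mul b)).add_const k
    |>.congr_deriv ?_
  simp only [hypTrigComb]
  ring

theorem deriv_hypTrigComb : deriv (hypTrigComb p q a b k) = hypTrigComb q p (-b) a 0 :=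
  funext fun x => (hasDerivAt_hypTrigComb p q a b k x).deriv

theorem iteratedDeriv_two_hypTrigComb :
    iteratedDeriv 2 (hypTrigComb p q a b k) = hypTrigComb p q (-a) (-b) 0 := by
  simp only [iteratedDeriv_eq_iterate, Function.iterate_succ_apply, Function.iterate_zero_apply,
    deriv_hypTrigComb]

theorem iteratedDeriv_three_hypTrigComb :
    iteratedDeriv 3 (hypTrigComb p q a b k) = hypTrigComb q p b (-a) 0 := by
  rw [iteratedDeriv_succ, iteratedDeriv_two_hypTrigComb, deriv_hypTrigComb, neg_neg]

theorem iteratedDeriv_four_hypTrigComb :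
    iteratedDeriv 4 (hypTrigComb p q a b k) = hypTrigComb p q a b 0 := by
  rw [iteratedDeriv_succ, iteratedDeriv_three_hypTrigComb, deriv_hypTrigComb, neg_neg]

end Space

section Time

variable {p q a b : ℝ → ℝ} (k x : ℝ)

theorem hasDerivAt_hypTrigComb_coeffs {p' q' a' b' t : ℝ} (hp : HasDerivAt p p' t)
    (hq : HasDerivAt q q' t) (ha : HasDerivAt a a' t) (hb : HasDerivAt b b' t) :
    HasDerivAt (fun s => hypTrigComb (p s) (q s) (a s) (b s) k x)
      (hypTrigComb p' q' a' b' 0 x) t := by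
  refine ((((hp.mul_const (sinh x)).add (hq.mul_const (cosh x))).add
    (ha.mul_const (sin x))).add (hb.mul_const (cos x))).add_const k |>.congr_deriv ?_
  simp only [hypTrigComb, add_zero]

theorem deriv_hypTrigComb_coeffs (hp : Differentiable ℝ p) (hq : Differentiable ℝ q)
    (ha : Differentiable ℝ a) (hb : Differentiable ℝ b) :
    deriv (fun s => hypTrigComb (p s) (q s) (a s) (b s) k x) =
      fun s => hypTrigComb (deriv p s) (deriv q s) (deriv a s) (deriv b s) 0 x :=
  funext fun t => (hasDerivAt_hypTrigComb_coeffs k x (hp t).hasDerivAt (hq t).hasDerivAt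
    (ha t).hasDerivAt (hb t).hasDerivAt).deriv

theorem iteratedDeriv_two_hypTrigComb_coeffs (hp : ContDiff ℝ 2 p) (hq : ContDiff ℝ 2 q)
    (ha : ContDiff ℝ 2 a) (hb : ContDiff ℝ 2 b) :
    iteratedDeriv 2 (fun s => hypTrigComb (p s) (q s) (a s) (b s) k x) =
      fun s => hypTrigComb (iteratedDeriv 2 p s) (iteratedDeriv 2 q s)
        (iteratedDeriv 2 a s) (iteratedDeriv 2 b s) 0 x := by
  have h1 {f : ℝ → ℝ} (hf : ContDiff ℝ 2 f) : Differentiable ℝ f :=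
    hf.differentiable (by norm_num)
  have h2 {f : ℝ → ℝ} (hf : ContDiff ℝ 2 f) : Differentiable ℝ (deriv f) := by
    simpa only [iteratedDeriv_one] using hf.differentiable_iteratedDeriv 1 (by norm_num)
  simp only [iteratedDeriv_eq_iterate, Function.iterate_succ_apply, Function.iterate_zero_apply]
  rw [deriv_hypTrigComb_coeffs k x (h1 hp) (h1 hq) (h1 ha) (h1 hb),
    deriv_hypTrigComb_coeffs 0 x (h2 hp) (h2 hq) (h2 ha) (h2 hb)]

end Time

theorem hypTrigComb_quadratic (p q a b k x : ℝ) :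
    hypTrigComb p q a b k x * hypTrigComb p q a b 0 x
      - 2 * hypTrigComb q p (-b) a 0 x * hypTrigComb q p b (-a) 0 x
      + hypTrigComb p q (-a) (-b) 0 x ^ 2
      = 2 * (q ^ 2 - p ^ 2 + a ^ 2 + b ^ 2) + k * hypTrigComb p q a b 0 x := by
  simp only [hypTrigComb]
  linear_combination (2 * (q ^ 2 - p ^ 2)) * cosh_sq x
    + (2 * (a ^ 2 + b ^ 2)) * sin_sq_add_cos_sq x

theorem solvesEq1_hypTrigComb (κ : ℝ) {p q a b : ℝ → ℝ} (hp : ContDiff ℝ 2 p)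
    (hq : ContDiff ℝ 2 q) (ha : ContDiff ℝ 2 a) (hb : ContDiff ℝ 2 b)
    (ha' : ∀ t, iteratedDeriv 2 a t = -κ * a t) (hb' : ∀ t, iteratedDeriv 2 b t = -κ * b t)
    (hpq : ∀ t, p t ^ 2 - q t ^ 2 = a t ^ 2 + b t ^ 2) (x t : ℝ) :
    SolvesEq1 (-2) 1 0 κ 1 (fun x t => hypTrigComb (p t) (q t) (a t) (b t) (-κ) x) x t := by
  have hlin : (fun y => κ * hypTrigComb (p t) (q t) (a t) (b t) (-κ) y
      + 0 * hypTrigComb (p t) (q t) (a t) (b t) (-κ) y ^ 2)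
      = hypTrigComb (κ * p t) (κ * q t) (κ * a t) (κ * b t) (-κ ^ 2) := by
    funext y
    simp only [hypTrigComb]
    ring
  simp only [SolvesEq1, iteratedDeriv_two_hypTrigComb_coeffs _ _ hp hq ha hb, hlin,
    iteratedDeriv_two_hypTrigComb, deriv_hypTrigComb, iteratedDeriv_three_hypTrigComb,
    iteratedDeriv_four_hypTrigComb, ha', hb']
  linear_combination (norm := skip)
    (-1) * hypTrigComb_quadratic (p t) (q t) (a t) (b t) (-κ) x + 2 * hpq t
  simp only [hypTrigComb]
  ring

theorem singular_nonclassical_case_f_solves_eq1 (κ : ℝ)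
    (A B w : ℝ → ℝ)
    (hA : ContDiff ℝ 2 A) (hB : ContDiff ℝ 2 B)
    (hAeq : ∀ t : ℝ, iteratedDeriv 2 A t = -κ * A t)
    (hBeq : ∀ t : ℝ, iteratedDeriv 2 B t = -κ * B t)
    (hpos : ∀ t : ℝ, 0 < (A t) ^ 2 + (B t) ^ 2)
    (hw : ContDiff ℝ 2 w) :
    ∀ x t : ℝ,
      SolvesEq1 (-2) 1 0 κ 1
        (fun x t =>
          (1 / 2) * Real.sqrt ((A t) ^ 2 + (B t) ^ 2) * Real.sinh (x + w t)
            - κ + (1 / 2) * (A t * Real.sin x + B t * Real.cos x)) x t := by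
  intro x t
  set R := fun s => √(A s ^ 2 + B s ^ 2)
  have hR : ContDiff ℝ 2 R := contDiff_iff_contDiffAt.mpr fun s =>
    ((hA.pow 2).add (hB.pow 2)).contDiffAt.sqrt (hpos s).ne'
  have hu : (fun x t => 1 / 2 * R t * sinh (x + w t) - κ + 1 / 2 * (A t * sin x + B t * cos x))
      = fun x t => hypTrigComb (1 / 2 * R t * cosh (w t)) (1 / 2 * R t * sinh (w t))
          (1 / 2 * A t) (1 / 2 * B t) (-κ) x := by
    funext x t
    simp only [hypTrigComb, sinh_add]
    ring
  rw [hu]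
  refine solvesEq1_hypTrigComb κ (by fun_prop) (by fun_prop) (by fun_prop) (by fun_prop)
    (fun s => ?_) (fun s => ?_) (fun s => ?_) x t
  · rw [iteratedDeriv_const_mul_field, hAeq]
    ring
  · rw [iteratedDeriv_const_mul_field, hBeq]
    ring
  · linear_combination (R s ^ 2 / 4) * cosh_sq (w s) + Real.sq_sqrt (hpos s).le / 4
end

section
/- Let α, β, κ, c₁ be real constants, set γ = −1/2 and μ = 1, and let w : ℝ → ℝ be four times continuously differentiable and satisfy w·w⁗ + α·w′·w‴ + β·(w″)² − c₁·w‴ − w·w″ + κ·w″ − (w′)² + c₁·w′ + 2c₁² = 0 on ℝ. Then the accelerating-wave function u(x,t) = w(x − ½c₁·t²) − c₁²·t² solves equation (1) at every point (x,t) ∈ ℝ². -/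
section IteratedDeriv

variable {𝕜 F : Type*} [NontriviallyNormedField 𝕜] [NormedAddCommGroup F] [NormedSpace 𝕜 F]

theorem iteratedDeriv_comp_sub_const_sub_const {n : ℕ} (hn : n ≠ 0) (f : 𝕜 → F) (a : 𝕜)
    (b : F) : iteratedDeriv n (fun y => f (y - a) - b) = fun y => iteratedDeriv n f (y - a) := by
  obtain ⟨m, rfl⟩ := Nat.exists_eq_succ_of_ne_zero hn
  rw [iteratedDeriv_succ', deriv_sub_const_fun, ← iteratedDeriv_succ',
    iteratedDeriv_comp_sub_const]

theorem iteratedDeriv_two_eq_deriv_deriv (f : 𝕜 → F) : iteratedDeriv 2 f = deriv (deriv f) := by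
  rw [iteratedDeriv_succ, iteratedDeriv_one]

theorem iteratedDeriv_iteratedDeriv (m n : ℕ) (f : 𝕜 → F) :
    iteratedDeriv m (iteratedDeriv n f) = iteratedDeriv (m + n) f := by
  simp only [iteratedDeriv_eq_iterate, Function.iterate_add_apply]

end IteratedDeriv

section ChainRule

variable {f g h : ℝ → ℝ}

theorem iteratedDeriv_two_comp (hg : ContDiff ℝ 2 g) (hh : ContDiff ℝ 2 h) (x : ℝ) :
    iteratedDeriv 2 (g ∘ h) x
      = iteratedDeriv 2 g (h x) * deriv h x ^ 2 + deriv g (h x) * iteratedDeriv 2 h x := by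
  have hg' : Differentiable ℝ (deriv g) := hg.deriv'.differentiable one_ne_zero
  have hh' : Differentiable ℝ (deriv h) := hh.deriv'.differentiable one_ne_zero
  have hderiv : deriv (g ∘ h) = (deriv g ∘ h) * deriv h :=
    funext fun y => deriv_comp y (hg.differentiable two_ne_zero _) (hh.differentiable two_ne_zero _)
  rw [iteratedDeriv_two_eq_deriv_deriv, iteratedDeriv_two_eq_deriv_deriv,
    iteratedDeriv_two_eq_deriv_deriv, hderiv]
  have hprod := ((hg' (h x)).hasDerivAt.comp x (hh.differentiable two_ne_zero x).hasDerivAt).mul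
    (hh' x).hasDerivAt
  rw [hprod.deriv, Function.comp_apply]
  ring

theorem iteratedDeriv_two_linear_add_sq (hf : ContDiff ℝ 2 f) (κ γ x : ℝ) :
    iteratedDeriv 2 (fun y => κ * f y + γ * f y ^ 2) x
      = (κ + 2 * γ * f x) * iteratedDeriv 2 f x + 2 * γ * deriv f x ^ 2 := by
  have hP (z : ℝ) : HasDerivAt (fun z => κ * z + γ * z ^ 2) (κ + 2 * γ * z) z :=
    (((hasDerivAt_id' z).const_mul κ).fun_add ((hasDerivAt_pow 2 z).const_mul γ)).congr_deriv
      (by norm_num; ring)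
  have hP' : iteratedDeriv 2 (fun z => κ * z + γ * z ^ 2) (f x) = 2 * γ := by
    rw [iteratedDeriv_two_eq_deriv_deriv, funext fun z => (hP z).deriv]
    exact ((((hasDerivAt_id' (f x)).const_mul (2 * γ)).const_add κ).deriv).trans (mul_one _)
  rw [show (fun y => κ * f y + γ * f y ^ 2) = (fun z => κ * z + γ * z ^ 2) ∘ f from rfl,
    iteratedDeriv_two_comp (by fun_prop) hf, hP', (hP (f x)).deriv]
  ring

end ChainRule

section AcceleratingWave

noncomputable def acceleratingWave (w : ℝ → ℝ) (c x t : ℝ) : ℝ :=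
  w (x - 1 / 2 * c * t ^ 2) - c ^ 2 * t ^ 2

variable {w : ℝ → ℝ} {c : ℝ}

theorem iteratedDeriv_acceleratingWave_space {n : ℕ} (hn : n ≠ 0) (t : ℝ) :
    iteratedDeriv n (fun y => acceleratingWave w c y t)
      = fun y => iteratedDeriv n w (y - 1 / 2 * c * t ^ 2) :=
  iteratedDeriv_comp_sub_const_sub_const hn w _ _

theorem deriv_acceleratingWave_space (x t : ℝ) :
    deriv (fun y => acceleratingWave w c y t) x = deriv w (x - 1 / 2 * c * t ^ 2) := by
  simpa only [iteratedDeriv_one] using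
    congrFun (iteratedDeriv_acceleratingWave_space (w := w) (c := c) one_ne_zero t) x

theorem iteratedDeriv_two_acceleratingWave_time (hw : ContDiff ℝ 2 w) (y t : ℝ) :
    iteratedDeriv 2 (fun s => acceleratingWave w c y s) t
      = c ^ 2 * t ^ 2 * iteratedDeriv 2 w (y - 1 / 2 * c * t ^ 2)
        - c * deriv w (y - 1 / 2 * c * t ^ 2) - 2 * c ^ 2 := by
  set ξ : ℝ → ℝ := fun s => y - 1 / 2 * c * s ^ 2
  have hξ (s : ℝ) : HasDerivAt ξ (-(c * s)) s :=
    (((hasDerivAt_pow 2 s).const_mul (1 / 2 * c)).const_sub y).congr_deriv (by norm_num; ring)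
  have hξ' : iteratedDeriv 2 ξ t = -c := by
    rw [iteratedDeriv_two_eq_deriv_deriv, funext fun s => (hξ s).deriv]
    exact (((hasDerivAt_id' t).const_mul c).neg.deriv).trans (by ring)
  have hsq : iteratedDeriv 2 (fun s => c ^ 2 * s ^ 2) t = 2 * c ^ 2 := by
    simp [iteratedDeriv_const_mul_field, iteratedDeriv_pow, mul_comm]
  have hwξ : iteratedDeriv 2 (w ∘ ξ) t
      = iteratedDeriv 2 w (ξ t) * (c * t) ^ 2 - deriv w (ξ t) * c := by
    rw [iteratedDeriv_two_comp hw (by fun_prop) t, (hξ t).deriv, hξ']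
    ring
  change iteratedDeriv 2 (fun s => (w ∘ ξ) s - c ^ 2 * s ^ 2) t = _
  rw [iteratedDeriv_fun_sub (by fun_prop) (by fun_prop), hwξ, hsq]
  ring

theorem iteratedDeriv_two_space_two_time_acceleratingWave (hw : ContDiff ℝ 4 w)
    (x t : ℝ) :
    iteratedDeriv 2 (fun y => iteratedDeriv 2 (fun s => acceleratingWave w c y s) t) x
      = c ^ 2 * t ^ 2 * iteratedDeriv 4 w (x - 1 / 2 * c * t ^ 2)
        - c * iteratedDeriv 3 w (x - 1 / 2 * c * t ^ 2) := by
  set W : ℝ → ℝ := fun z => c ^ 2 * t ^ 2 * iteratedDeriv 2 w z - c * deriv w z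
  have hW : (fun y => iteratedDeriv 2 (fun s => acceleratingWave w c y s) t)
      = fun y => W (y - 1 / 2 * c * t ^ 2) - 2 * c ^ 2 :=
    funext fun y => iteratedDeriv_two_acceleratingWave_time (hw.of_le (by norm_num)) y t
  have hw2 : ContDiff ℝ 2 (iteratedDeriv 2 w) := by
    rw [iteratedDeriv_eq_iterate]; exact hw.iterate_deriv' 2 2
  have hw1 : ContDiff ℝ 2 (deriv w) := (hw.of_le (by norm_num)).iterate_deriv' 2 1
  rw [hW, iteratedDeriv_comp_sub_const_sub_const two_ne_zero]
  dsimp only [W]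
  rw [iteratedDeriv_fun_sub (by fun_prop) (by fun_prop), iteratedDeriv_const_mul_field,
    iteratedDeriv_const_mul_field, iteratedDeriv_iteratedDeriv, ← iteratedDeriv_succ']

end AcceleratingWave

theorem accelerating_wave_solves_eq1 (α β κ c₁ : ℝ) (w : ℝ → ℝ)
    (hw : ContDiff ℝ 4 w)
    (hODE : ∀ z : ℝ,
      w z * iteratedDeriv 4 w z
        + α * deriv w z * iteratedDeriv 3 w z
        + β * (iteratedDeriv 2 w z) ^ 2
        - c₁ * iteratedDeriv 3 w z
        - w z * iteratedDeriv 2 w z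
        + κ * iteratedDeriv 2 w z
        - (deriv w z) ^ 2
        + c₁ * deriv w z
        + 2 * c₁ ^ 2 = 0) :
    ∀ x t : ℝ,
      SolvesEq1 α β (-1 / 2) κ 1
        (fun x t => w (x - (1 / 2) * c₁ * t ^ 2) - c₁ ^ 2 * t ^ 2) x t := by
  intro x t
  have hw2 : ContDiff ℝ 2 w := hw.of_le (by norm_num)
  have hu : ContDiff ℝ 2 (fun y => acceleratingWave w c₁ y t) := by
    unfold acceleratingWave; fun_prop
  change SolvesEq1 α β (-1 / 2) κ 1 (acceleratingWave w c₁) x t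
  rw [SolvesEq1, iteratedDeriv_two_acceleratingWave_time hw2, iteratedDeriv_two_linear_add_sq hu,
    iteratedDeriv_two_space_two_time_acceleratingWave hw, deriv_acceleratingWave_space,
    iteratedDeriv_acceleratingWave_space (by norm_num),
    iteratedDeriv_acceleratingWave_space (by norm_num),
    iteratedDeriv_acceleratingWave_space (by norm_num)]
  unfold acceleratingWave
  linear_combination -hODE (x - 1 / 2 * c₁ * t ^ 2)
end

section
/- Let γ, κ be real constants with γ ≠ −1/2, and set α = −2γ, β = −1 − 2γ and μ = 1. Then for arbitrary twice continuously differentiable functions w, A, B : ℝ → ℝ, the function u(x,t) = w(t)·cosh(x + A(t)) + B(t)·sinh(x + A(t)) − κ/(1 + 2γ) solves equation (1) at every point (x,t) ∈ ℝ². -/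
/-!
Writing `cosh (x + A t)` and `sinh (x + A t)` with the addition formulas puts the ansatz in the
separated form `u = f(t) cosh x + g(t) sinh x - c`. Then `∂ₓₓ(u + c) = u + c`, so the terms
`u_tt` and `μ u_xxtt` (with `μ = 1`) cancel for any `f`, `g`, while the remaining purely
`x`-dependent terms collapse, for `α = -2γ` and `β = -1 - 2γ`, to `(κ - (1 + 2γ) c) (u + c)`,
which vanishes for `c = κ / (1 + 2γ)`.
-/

open Real

section IteratedDeriv

variable {𝕜 : Type*} [NontriviallyNormedField 𝕜]

theorem iteratedDeriv_fun_sub_const {F : Type*} [NormedAddCommGroup F] [NormedSpace 𝕜 F]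
    {n : ℕ} (hn : 0 < n) (f : 𝕜 → F) (c : F) :
    iteratedDeriv n (fun y => f y - c) = iteratedDeriv n f := by
  funext x
  simpa only [sub_eq_add_neg, add_comm] using iteratedDeriv_const_add (x := x) hn (-c) (f := f)

end IteratedDeriv

theorem iteratedDeriv_cosh_sinh_of_even (a b : ℝ) {n : ℕ} (hn : Even n) (x : ℝ) :
    iteratedDeriv n (fun y => a * cosh y + b * sinh y) x = a * cosh x + b * sinh x := by
  obtain ⟨k, rfl⟩ := hn
  rw [← two_mul, iteratedDeriv_fun_add (by fun_prop) (by fun_prop)]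
  simp

theorem iteratedDeriv_cosh_sinh_of_odd (a b : ℝ) {n : ℕ} (hn : Odd n) (x : ℝ) :
    iteratedDeriv n (fun y => a * cosh y + b * sinh y) x = a * sinh x + b * cosh x := by
  obtain ⟨k, rfl⟩ := hn
  rw [iteratedDeriv_fun_add (by fun_prop) (by fun_prop)]
  simp

theorem solvesEq1_cosh_sinh_sub_const {γ κ c : ℝ} (hc : (1 + 2 * γ) * c = κ) {f g : ℝ → ℝ}
    (hf : ContDiff ℝ 2 f) (hg : ContDiff ℝ 2 g) (x t : ℝ) :
    SolvesEq1 (-2 * γ) (-1 - 2 * γ) γ κ 1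
      (fun x t => f t * cosh x + g t * sinh x - c) x t := by
  have time_slice (y : ℝ) :
      iteratedDeriv 2 (fun s => f s * cosh y + g s * sinh y - c) t =
        iteratedDeriv 2 f t * cosh y + iteratedDeriv 2 g t * sinh y := by
    rw [iteratedDeriv_fun_sub_const two_pos, iteratedDeriv_fun_add (by fun_prop) (by fun_prop),
      iteratedDeriv_mul_const_field, iteratedDeriv_mul_const_field]
  have space_slice : ContDiff ℝ 2 (fun y => f t * cosh y + g t * sinh y - c) := by fun_prop
  unfold SolvesEq1
  rw [iteratedDeriv_fun_add (by fun_prop) (by fun_prop), iteratedDeriv_const_mul_field,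
    iteratedDeriv_const_mul_field, iteratedDeriv_two_fun_sq space_slice.contDiffAt,
    deriv_sub_const, ← iteratedDeriv_one]
  simp (disch := decide) only [time_slice, iteratedDeriv_fun_sub_const,
    iteratedDeriv_cosh_sinh_of_even, iteratedDeriv_cosh_sinh_of_odd]
  linear_combination (f t * cosh x + g t * sinh x) * hc

theorem singular_nonclassical_case_b_solves_eq1 (γ κ : ℝ) (hγ : γ ≠ -1 / 2)
    (w A B : ℝ → ℝ)
    (hw : ContDiff ℝ 2 w) (hA : ContDiff ℝ 2 A) (hB : ContDiff ℝ 2 B) :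
    ∀ x t : ℝ,
      SolvesEq1 (-2 * γ) (-1 - 2 * γ) γ κ 1
        (fun x t =>
          w t * Real.cosh (x + A t) + B t * Real.sinh (x + A t)
            - κ / (1 + 2 * γ)) x t := by
  intro x t
  have hc : (1 + 2 * γ) * (κ / (1 + 2 * γ)) = κ :=
    mul_div_cancel₀ κ fun h => hγ (by linarith)
  have separated : (fun x t => w t * cosh (x + A t) + B t * sinh (x + A t) - κ / (1 + 2 * γ)) =
      fun x t => (w t * cosh (A t) + B t * sinh (A t)) * cosh x
        + (w t * sinh (A t) + B t * cosh (A t)) * sinh x - κ / (1 + 2 * γ) := by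
    funext x t
    rw [cosh_add, sinh_add]
    ring
  rw [separated]
  exact solvesEq1_cosh_sinh_sub_const hc (by fun_prop) (by fun_prop) x t
end

section
/- Let α, γ, κ be real constants with γ ≠ −1/2, and set β = −1 − α − 4γ and μ = 1. Then for an arbitrary twice continuously differentiable function w : ℝ → ℝ, the function u(x,t) = w(t)·exp(x) − κ/(1 + 2γ) solves equation (1) at every point (x,t) ∈ ℝ². -/
open Real

theorem iteratedDeriv_sub_const {𝕜 F : Type*} [NontriviallyNormedField 𝕜] [NormedAddCommGroup F]
    [NormedSpace 𝕜 F] {n : ℕ} (hn : 0 < n) (f : 𝕜 → F) (c : F) (x : 𝕜) :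
    iteratedDeriv n (fun z => f z - c) x = iteratedDeriv n f x := by
  simpa only [neg_add_eq_sub] using iteratedDeriv_const_add hn (-c) (f := f) (x := x)

theorem Real.iteratedDeriv_exp (n : ℕ) : iteratedDeriv n exp = exp := by
  rw [iteratedDeriv_eq_iterate, iter_deriv_exp]

theorem iteratedDeriv_mul_exp_sub_const {n : ℕ} (hn : 0 < n) (a c x : ℝ) :
    iteratedDeriv n (fun y => a * exp y - c) x = a * exp x := by
  rw [iteratedDeriv_sub_const hn, iteratedDeriv_const_mul_field, Real.iteratedDeriv_exp]

theorem iteratedDeriv_mul_const_sub_const {n : ℕ} (hn : 0 < n) (w : ℝ → ℝ) (b c t : ℝ) :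
    iteratedDeriv n (fun s => w s * b - c) t = iteratedDeriv n w t * b := by
  rw [iteratedDeriv_sub_const hn, iteratedDeriv_mul_const_field]

theorem iteratedDeriv_linear_add_sq_mul_exp_sub_const {n : ℕ} (hn : 0 < n) (κ γ a c x : ℝ) :
    iteratedDeriv n (fun y => κ * (a * exp y - c) + γ * (a * exp y - c) ^ 2) x
      = 2 ^ n * γ * a ^ 2 * exp x ^ 2 + (κ - 2 * γ * c) * a * exp x := by
  have hexpand : (fun y => κ * (a * exp y - c) + γ * (a * exp y - c) ^ 2)
      = fun y => (γ * a ^ 2 * exp (2 * y) + (κ - 2 * γ * c) * a * exp y) - (κ * c - γ * c ^ 2) := by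
    funext y
    rw [two_mul, exp_add]
    ring
  rw [hexpand, iteratedDeriv_sub_const hn, iteratedDeriv_fun_add (by fun_prop) (by fun_prop),
    iteratedDeriv_const_mul_field, iteratedDeriv_const_mul_field, iteratedDeriv_exp_const_mul,
    Real.iteratedDeriv_exp]
  beta_reduce
  rw [two_mul x, exp_add]
  ring

theorem singular_nonclassical_case_e_solves_eq1_general (α γ κ : ℝ) (hγ : γ ≠ -1 / 2)
    (w : ℝ → ℝ) :
    ∀ x t : ℝ,
      SolvesEq1 α (-1 - α - 4 * γ) γ κ 1
        (fun x t => w t * Real.exp x - κ / (1 + 2 * γ)) x t := by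
  intro x t
  set c := κ / (1 + 2 * γ)
  have hc : c * (1 + 2 * γ) = κ := div_mul_cancel₀ κ (by contrapose! hγ; linarith)
  unfold SolvesEq1
  simp only [iteratedDeriv_mul_const_sub_const two_pos]
  rw [← iteratedDeriv_one, iteratedDeriv_linear_add_sq_mul_exp_sub_const two_pos,
    iteratedDeriv_const_mul_field, Real.iteratedDeriv_exp]
  simp only [iteratedDeriv_mul_exp_sub_const (Nat.succ_pos _)]
  linear_combination (w t * exp x) * hc

theorem singular_nonclassical_case_e_solves_eq1 (α γ κ : ℝ) (hγ : γ ≠ -1 / 2)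
    (w : ℝ → ℝ) (hw : ContDiff ℝ 2 w) :
    ∀ x t : ℝ,
      SolvesEq1 α (-1 - α - 4 * γ) γ κ 1
        (fun x t => w t * Real.exp x - κ / (1 + 2 * γ)) x t :=
  singular_nonclassical_case_e_solves_eq1_general α γ κ hγ w
end

section
/- Let α, β, γ, κ, μ be real constants and let H₁, H₂, w : ℝ → ℝ be twice continuously differentiable functions satisfying, for all t: H₂″ = 12γ·H₂², H₁″ = 12γ·H₂·H₁, and w″ − 4γ·H₂·w = 2κ·H₂ + 4·(6γμ + β)·H₂² + 2γ·H₁². Then the function u(x,t) = w(t) + H₁(t)·x + H₂(t)·x² solves equation (1) at every point (x,t) ∈ ℝ². -/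
/-!
For `u = w + H₁ x + H₂ x²` every spatial derivative of order three or more vanishes, so the
`α` and `u u_xxxx` terms of (1) drop out and both sides become polynomials in `x` of degree two
(`κ u + γ u²` is a quartic, but its second derivative is quadratic). Matching the coefficients of
`x²`, `x` and `1` gives exactly the three ordinary differential equations for `H₂`, `H₁` and `w`.
-/

-- Quadratics are used as quartics with vanishing top coefficients: the family is then closed
-- under `deriv`, so iterated derivatives unfold by rewriting.
def quartic (a b c d e y : ℝ) : ℝ := a + b * y + c * y ^ 2 + d * y ^ 3 + e * y ^ 4

theorem hasDerivAt_quartic (a b c d e y : ℝ) :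
    HasDerivAt (quartic a b c d e) (quartic b (2 * c) (3 * d) (4 * e) 0 y) y := by
  have h := ((((hasDerivAt_const y a).add ((hasDerivAt_id y).const_mul b)).add
    ((hasDerivAt_pow 2 y).const_mul c)).add ((hasDerivAt_pow 3 y).const_mul d)).add
    ((hasDerivAt_pow 4 y).const_mul e)
  refine h.congr_deriv ?_
  norm_num [quartic]
  ring

theorem deriv_quartic (a b c d e : ℝ) :
    deriv (quartic a b c d e) = quartic b (2 * c) (3 * d) (4 * e) 0 :=
  funext fun y => (hasDerivAt_quartic a b c d e y).deriv

theorem iteratedDeriv_succ_quartic (n : ℕ) (a b c d e : ℝ) :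
    iteratedDeriv (n + 1) (quartic a b c d e)
      = iteratedDeriv n (quartic b (2 * c) (3 * d) (4 * e) 0) := by
  rw [iteratedDeriv_succ', deriv_quartic]

theorem iteratedDeriv_add_mul_add_mul_sq {n : ℕ} {f g h : ℝ → ℝ}
    (hf : ContDiff ℝ n f) (hg : ContDiff ℝ n g) (hh : ContDiff ℝ n h) (x t : ℝ) :
    iteratedDeriv n (fun s => f s + g s * x + h s * x ^ 2) t
      = iteratedDeriv n f t + iteratedDeriv n g t * x + iteratedDeriv n h t * x ^ 2 := by
  rw [iteratedDeriv_fun_add (by fun_prop) (by fun_prop),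
    iteratedDeriv_fun_add (by fun_prop) (by fun_prop),
    iteratedDeriv_mul_const_field, iteratedDeriv_mul_const_field]

theorem quadratic_profile_reduction_solves_eq1 (α β γ κ μ : ℝ)
    (H₁ H₂ w : ℝ → ℝ)
    (hH₁ : ContDiff ℝ 2 H₁) (hH₂ : ContDiff ℝ 2 H₂) (hw : ContDiff ℝ 2 w)
    (hH₂eq : ∀ t : ℝ, iteratedDeriv 2 H₂ t = 12 * γ * (H₂ t) ^ 2)
    (hH₁eq : ∀ t : ℝ, iteratedDeriv 2 H₁ t = 12 * γ * H₂ t * H₁ t)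
    (hweq : ∀ t : ℝ,
      iteratedDeriv 2 w t - 4 * γ * H₂ t * w t =
        2 * κ * H₂ t + 4 * (6 * γ * μ + β) * (H₂ t) ^ 2 + 2 * γ * (H₁ t) ^ 2) :
    ∀ x t : ℝ,
      SolvesEq1 α β γ κ μ
        (fun x t => w t + H₁ t * x + H₂ t * x ^ 2) x t := by
  intro x t
  have hprofile :
      (fun y => w t + H₁ t * y + H₂ t * y ^ 2) = quartic (w t) (H₁ t) (H₂ t) 0 0 := by
    funext y; simp only [quartic]; ring
  have hflux :
      (fun y => κ * (w t + H₁ t * y + H₂ t * y ^ 2) + γ * (w t + H₁ t * y + H₂ t * y ^ 2) ^ 2)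
      = quartic (κ * w t + γ * w t ^ 2) (κ * H₁ t + 2 * γ * w t * H₁ t)
          (κ * H₂ t + γ * (H₁ t ^ 2 + 2 * w t * H₂ t)) (2 * γ * H₁ t * H₂ t) (γ * H₂ t ^ 2) := by
    funext y; simp only [quartic]; ring
  have hmixed : (fun y => iteratedDeriv 2 (fun s => w s + H₁ s * y + H₂ s * y ^ 2) t)
      = quartic (iteratedDeriv 2 w t) (iteratedDeriv 2 H₁ t) (iteratedDeriv 2 H₂ t) 0 0 := by
    funext y
    rw [iteratedDeriv_add_mul_add_mul_sq hw hH₁ hH₂]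
    simp only [quartic]
    ring
  unfold SolvesEq1
  rw [iteratedDeriv_add_mul_add_mul_sq hw hH₁ hH₂, hprofile, hflux, hmixed]
  simp only [iteratedDeriv_succ_quartic, iteratedDeriv_zero, deriv_quartic, quartic]
  rw [hH₂eq, hH₁eq]
  linear_combination hweq t
end
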